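/- arXiv:0911.5615 — 2 statements merged into one kernel-verified Lean document; each statement's English description precedes it below -/
import Mathlib

section
/- Let k ≥ 2 and n ≥ 0. Every equivalence class of ≡_k on S_n contains exactly one k-maximal permutation ω, and this ω satisfies Inv(σ) ⊆ Inv(ω) for every σ in the class (it is the maximum of the class for the right weak order). -/
/-- The `k`-recoil equivalence `≡_k` on `Equiv.Perm (Fin n)`.
Values are 0-indexed: `a : Fin n` represents the value `a+1` of the paper.
`σ ≡_k τ` iff for all values `a < b` with `b - a < k`,
`σ⁻¹(a) < σ⁻¹(b) ↔ τ⁻¹(a) < τ⁻¹(b)`. -/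
def recoilEquiv (k n : ℕ) (σ τ : Equiv.Perm (Fin n)) : Prop :=
  ∀ a b : Fin n, (a : ℕ) < b → (b : ℕ) - a < k →
    (σ.symm a < σ.symm b ↔ τ.symm a < τ.symm b)

/-- The inversion set of a permutation: pairs of values `a < b` that appear
in the order `… b … a …` in the one-line word of `σ`. -/
def invSet {n : ℕ} (σ : Equiv.Perm (Fin n)) : Set (Fin n × Fin n) :=
  {p | p.1 < p.2 ∧ σ.symm p.2 < σ.symm p.1}

/-- The extension `σ̃ : ℤ → ℤ` of `σ ∈ S_n` (1-indexed) fixing all `i ∉ [1, n]`. -/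
def extPerm {n : ℕ} (σ : Equiv.Perm (Fin n)) : ℤ → ℤ := fun i =>
  if h : 0 < i ∧ i ≤ (n : ℤ) then ((σ ⟨(i - 1).toNat, by omega⟩ : Fin n) : ℤ) + 1 else i

/-- The `k`-descent code: `DC k σ ℓ` is `d_{ℓ+1}` of the paper, the rank of
`σ̃(ℓ+1)` among the `k` entries `σ̃(ℓ+1-k+1), …, σ̃(ℓ+1)` (positions 1-indexed). -/
noncomputable def DC (k : ℕ) {n : ℕ} (σ : Equiv.Perm (Fin n)) : Fin n → ℕ := fun ℓ =>
  ((Finset.Icc ((ℓ : ℤ) + 1 - k + 1) ((ℓ : ℤ) + 1)).filter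
    (fun j => extPerm σ j ≤ extPerm σ ((ℓ : ℤ) + 1))).card

/-- `σ` is `k`-minimal: no index `i` with `σ(i) - σ(i+1) ≥ k`. -/
def kMinimal (k : ℕ) {n : ℕ} (σ : Equiv.Perm (Fin n)) : Prop :=
  ¬ ∃ (i : ℕ) (h : i + 1 < n),
      (σ ⟨i + 1, h⟩ : ℕ) + k ≤ (σ ⟨i, Nat.lt_of_succ_lt h⟩ : ℕ)

/-- `σ` is `k`-maximal: no index `i` with `σ(i+1) - σ(i) ≥ k`. -/
def kMaximal (k : ℕ) {n : ℕ} (σ : Equiv.Perm (Fin n)) : Prop :=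
  ¬ ∃ (i : ℕ) (h : i + 1 < n),
      (σ ⟨i, Nat.lt_of_succ_lt h⟩ : ℕ) + k ≤ (σ ⟨i + 1, h⟩ : ℕ)

/-- Shifted concatenation `σ • τ` of two permutations. -/
def shiftConcat {m n : ℕ} (σ : Equiv.Perm (Fin m)) (τ : Equiv.Perm (Fin n)) :
    Equiv.Perm (Fin (m + n)) :=
  finSumFinEquiv.symm.trans ((Equiv.sumCongr σ τ).trans finSumFinEquiv)

/-- `π` is `•`-indecomposable: no proper prefix of positions maps onto
a prefix of values. -/
def indecomposable {n : ℕ} (π : Equiv.Perm (Fin n)) : Prop :=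
  ¬ ∃ m : ℕ, 0 < m ∧ m < n ∧ ∀ i : Fin n, (i : ℕ) < m → (π i : ℕ) < m

/-!
Among the permutations equivalent to `σ`, take one, `ω`, with the most inversions. It is
`k`-maximal: an adjacent ascent `ω(i) + k ≤ ω(i+1)` could be swapped, which changes the relative
order only of two values at distance `≥ k`, so stays in the class and gains an inversion.

Moreover, if `ω` is `k`-maximal and `a < b` appear in this order in `ω`, then so do they in
every `τ ≡_k ω`. If `b - a < k` this is the definition of `≡_k`. Otherwise, since `ω` never
climbs by `k` or more between adjacent positions, some value `c` with `a < c < a + k ≤ b`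
sits between `a` and `b` in `ω`, and we conclude by induction on `b - a` for `(a, c)` and `(c, b)`.
Hence `Inv(τ) ⊆ Inv(ω)`; two `k`-maximal elements of a class have equal inversion sets, so they
coincide.
-/

open Equiv

variable {k n : ℕ}

theorem recoilEquiv_equivalence : Equivalence (recoilEquiv k n) where
  refl _ _ _ _ _ := Iff.rfl
  symm h a b hab hk := (h a b hab hk).symm
  trans h h' a b hab hk := (h a b hab hk).trans (h' a b hab hk)

theorem invSet_injective : Function.Injective (invSet (n := n)) := by
  intro β ω h
  have hmono : StrictMono (ω.symm ∘ β) := by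
    intro i j hij
    have hβ : β.symm (β i) < β.symm (β j) := by simpa using hij
    rcases lt_trichotomy (β i) (β j) with hlt | heq | hgt
    · have hnot : (β i, β j) ∉ invSet ω := h ▸ fun hmem => hβ.not_gt hmem.2
      exact (not_lt.mp fun hlt' => hnot ⟨hlt, hlt'⟩).lt_of_ne
        (ω.symm.injective.ne (β.injective.ne hij.ne))
    · exact absurd (β.injective heq) hij.ne
    · have hmem : (β j, β i) ∈ invSet ω := h ▸ show (β j, β i) ∈ invSet β from ⟨hgt, hβ⟩
      exact hmem.2
  exact Equiv.ext fun i => ω.symm_apply_eq.mp (congrFun hmono.eq_id i)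

theorem Fin.swap_apply_lt_swap_apply_iff {i j x y : Fin n} (hij : (j : ℕ) = i + 1)
    (hxy : ¬(x = i ∧ y = j)) (hyx : ¬(x = j ∧ y = i)) :
    swap i j x < swap i j y ↔ x < y := by
  simp only [swap_apply_def, Fin.lt_def, Fin.ext_iff] at *
  split_ifs <;> omega

theorem symm_mul_swap_lt_iff (ω : Perm (Fin n)) {i j a b : Fin n} (hij : (j : ℕ) = i + 1)
    (hab : ¬(a = ω i ∧ b = ω j)) (hba : ¬(a = ω j ∧ b = ω i)) :
    (ω * swap i j).symm a < (ω * swap i j).symm b ↔ ω.symm a < ω.symm b := by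
  simp only [Perm.mul_def, symm_trans_apply, symm_swap]
  exact Fin.swap_apply_lt_swap_apply_iff hij (by simpa only [symm_apply_eq] using hab)
    (by simpa only [symm_apply_eq] using hba)

theorem recoilEquiv_mul_swap {ω : Perm (Fin n)} {i j : Fin n} (hij : (j : ℕ) = i + 1)
    (hjump : (ω i : ℕ) + k ≤ ω j) : recoilEquiv k n ω (ω * swap i j) := by
  intro a b hab hbk
  refine (symm_mul_swap_lt_iff ω hij ?_ ?_).symm <;> rintro ⟨rfl, rfl⟩ <;> omega

theorem invSet_ssubset_mul_swap {ω : Perm (Fin n)} {i j : Fin n} (hij : (j : ℕ) = i + 1)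
    (hasc : ω i < ω j) : invSet ω ⊂ invSet (ω * swap i j) := by
  have hij' : i < j := Fin.lt_def.mpr (by omega)
  have hsubset : invSet ω ⊆ invSet (ω * swap i j) := by
    rintro ⟨a, b⟩ ⟨hab, hinv⟩
    refine ⟨hab, (symm_mul_swap_lt_iff ω hij ?_ ?_).mpr hinv⟩
    · rintro ⟨rfl, rfl⟩
      exact hasc.not_gt hab
    · rintro ⟨rfl, rfl⟩
      simp only [symm_apply_apply] at hinv
      exact hij'.not_gt hinv
  refine (Set.ssubset_iff_of_subset hsubset).mpr ⟨(ω i, ω j), ⟨hasc, ?_⟩, ?_⟩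
  · simpa [Perm.mul_def] using hij'
  · rintro ⟨-, hinv⟩
    simp only [symm_apply_apply] at hinv
    exact hij'.not_gt hinv

theorem exists_recoilEquiv_kMaximal (σ : Perm (Fin n)) :
    ∃ ω, recoilEquiv k n σ ω ∧ kMaximal k ω := by
  classical
  obtain ⟨ω, hω, hmax⟩ := (Finset.univ.filter (recoilEquiv k n σ)).exists_max_image
    (fun τ => (invSet τ).ncard) ⟨σ, by simpa using recoilEquiv_equivalence.refl σ⟩
  simp only [Finset.mem_filter, Finset.mem_univ, true_and] at hω hmax
  refine ⟨ω, hω, ?_⟩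
  rintro ⟨i, hi, hjump⟩
  have hij : ((⟨i + 1, hi⟩ : Fin n) : ℕ) = (⟨i, Nat.lt_of_succ_lt hi⟩ : Fin n) + 1 := rfl
  have hasc : ω ⟨i, Nat.lt_of_succ_lt hi⟩ < ω ⟨i + 1, hi⟩ :=
    (Fin.le_def.mpr (by omega)).lt_of_ne (ω.injective.ne (Fin.ne_of_val_ne (by simp)))
  exact (hmax _ (recoilEquiv_equivalence.trans hω (recoilEquiv_mul_swap hij hjump))).not_gt
    (Set.ncard_lt_ncard (invSet_ssubset_mul_swap hij hasc) (Set.toFinite _))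
theorem kMaximal.exists_between {ω : Perm (Fin n)} (hω : kMaximal k ω) {a : ℕ} {p q : Fin n}
    (hpq : p < q) (hp : (ω p : ℕ) ≤ a) (hq : a + k ≤ ω q) :
    ∃ r, p < r ∧ r < q ∧ a < ω r ∧ (ω r : ℕ) < a + k := by
  obtain ⟨m, hm⟩ := q
  induction m with
  | zero => exact absurd (Fin.lt_def.mp hpq) (Nat.not_lt_zero _)
  | succ m ih =>
    have hstep : (ω ⟨m + 1, hm⟩ : ℕ) < ω ⟨m, Nat.lt_of_succ_lt hm⟩ + k :=
      not_le.mp fun h => hω ⟨m, hm, h⟩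
    have ha : a < ω ⟨m, Nat.lt_of_succ_lt hm⟩ := by omega
    have hpm : p < ⟨m, Nat.lt_of_succ_lt hm⟩ := by
      rcases (Nat.lt_succ_iff.mp (Fin.lt_def.mp hpq)).lt_or_eq with h | h
      · exact Fin.lt_def.mpr h
      · rw [show p = ⟨m, Nat.lt_of_succ_lt hm⟩ from Fin.ext h] at hp
        omega
    by_cases hmk : (ω ⟨m, Nat.lt_of_succ_lt hm⟩ : ℕ) < a + k
    · exact ⟨_, hpm, Fin.lt_def.mpr (Nat.lt_succ_self m), ha, hmk⟩
    · obtain ⟨r, hpr, hrm, hr⟩ := ih _ hpm (not_lt.mp hmk)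
      exact ⟨r, hpr, hrm.trans (Fin.lt_def.mpr (Nat.lt_succ_self m)), hr⟩

theorem kMaximal.symm_lt_of_recoilEquiv {ω τ : Perm (Fin n)} (hω : kMaximal k ω)
    (hτ : recoilEquiv k n ω τ) {a b : Fin n} (hab : a < b) (hpos : ω.symm a < ω.symm b) :
    τ.symm a < τ.symm b := by
  by_cases hk : (b : ℕ) - a < k
  · exact (hτ a b hab hk).mp hpos
  obtain ⟨r, har, hrb, hac, hck⟩ :=
    hω.exists_between (a := a) hpos (by simp) (by simp only [apply_symm_apply]; omega)
  have hcb : ω r < b := Fin.lt_def.mpr (by omega)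
  exact (hω.symm_lt_of_recoilEquiv hτ hac (by simpa using har)).trans
    (hω.symm_lt_of_recoilEquiv hτ hcb (by simpa using hrb))
termination_by (b : ℕ) - a
decreasing_by all_goals omega

theorem kMaximal.invSet_subset {ω τ : Perm (Fin n)} (hω : kMaximal k ω)
    (hτ : recoilEquiv k n ω τ) : invSet τ ⊆ invSet ω := by
  rintro ⟨a, b⟩ ⟨hab, hinv⟩
  refine ⟨hab, lt_of_not_ge fun hle => hinv.not_gt (hω.symm_lt_of_recoilEquiv hτ hab ?_)⟩
  exact hle.lt_of_ne (ω.symm.injective.ne hab.ne)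

theorem recoil_class_unique_max_general (k n : ℕ) (σ : Equiv.Perm (Fin n)) :
    ∃ ω : Equiv.Perm (Fin n),
      recoilEquiv k n σ ω ∧ kMaximal k ω ∧
      (∀ τ, recoilEquiv k n σ τ → invSet τ ⊆ invSet ω) ∧
      (∀ β, recoilEquiv k n σ β → kMaximal k β → β = ω) := by
  have hequiv : Equivalence (recoilEquiv k n) := recoilEquiv_equivalence
  obtain ⟨ω, hσω, hω⟩ := exists_recoilEquiv_kMaximal (k := k) σ
  have hdom : ∀ τ, recoilEquiv k n σ τ → invSet τ ⊆ invSet ω := fun τ hτ =>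
    hω.invSet_subset (hequiv.trans (hequiv.symm hσω) hτ)
  refine ⟨ω, hσω, hω, hdom, fun β hβ hβmax => invSet_injective ?_⟩
  exact (hdom β hβ).antisymm (hβmax.invSet_subset (hequiv.trans (hequiv.symm hβ) hσω))

/-- every `≡_k` class contains exactly one `k`-maximal
permutation `ω`, and `ω` is the maximum of the class for the right weak
order (`Inv(σ) ⊆ Inv(ω)` for all `σ` in the class). -/
theorem recoil_class_unique_max (k n : ℕ) (hk : 2 ≤ k) (σ : Equiv.Perm (Fin n)) :
    ∃ ω : Equiv.Perm (Fin n),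
      recoilEquiv k n σ ω ∧ kMaximal k ω ∧
      (∀ τ, recoilEquiv k n σ τ → invSet τ ⊆ invSet ω) ∧
      (∀ β, recoilEquiv k n σ β → kMaximal k β → β = ω) :=
  recoil_class_unique_max_general k n σ
end

section
/- Let k ≥ 2 and n ≥ 0, and let α ∈ S_n be k-minimal. Then the order filter {x ∈ S_n : Inv(α) ⊆ Inv(x)} of the right weak order is a union of ≡_k classes: for all x, y ∈ S_n, if Inv(α) ⊆ Inv(x) and y ≡_k x, then Inv(α) ⊆ Inv(y). -/
theorem Nat.exists_boundary_of_le {P : ℕ → Prop} {p q : ℕ} (hpq : p ≤ q) (hp : P p)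
    (hq : ¬ P q) : ∃ i, p ≤ i ∧ i < q ∧ P i ∧ ¬ P (i + 1) := by
  induction q, hpq using Nat.le_induction with
  | base => exact absurd hp hq
  | succ q hpq ih =>
    by_cases hPq : P q
    · exact ⟨q, hpq, q.lt_succ_self, hPq, hq⟩
    · obtain ⟨i, hpi, hiq, hPi, hPi'⟩ := ih hPq
      exact ⟨i, hpi, hiq.trans q.lt_succ_self, hPi, hPi'⟩

section

variable {n : ℕ}

theorem mem_invSet {σ : Equiv.Perm (Fin n)} {a b : Fin n} :
    (a, b) ∈ invSet σ ↔ a < b ∧ σ.symm b < σ.symm a :=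
  Iff.rfl

theorem invSet_trans {σ : Equiv.Perm (Fin n)} {a b c : Fin n} (hac : (a, c) ∈ invSet σ)
    (hcb : (c, b) ∈ invSet σ) : (a, b) ∈ invSet σ :=
  ⟨hac.1.trans hcb.1, hcb.2.trans hac.2⟩

theorem recoilEquiv.mem_invSet_iff {k : ℕ} {σ τ : Equiv.Perm (Fin n)} (h : recoilEquiv k n σ τ)
    {a b : Fin n} (hab : (b : ℕ) - a < k) : (a, b) ∈ invSet σ ↔ (a, b) ∈ invSet τ := by
  simp only [mem_invSet, and_congr_right_iff]
  intro hlt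
  rw [← not_le, ← not_le, (σ.symm.injective.ne hlt.ne).le_iff_lt,
    (τ.symm.injective.ne hlt.ne).le_iff_lt, h a b hlt hab]

theorem kMinimal.lt_add {k : ℕ} {α : Equiv.Perm (Fin n)} (hα : kMinimal k α) (i : ℕ)
    (hi : i + 1 < n) : (α ⟨i, i.lt_succ_self.trans hi⟩ : ℕ) < α ⟨i + 1, hi⟩ + k := by
  by_contra! h
  exact hα ⟨i, hi, h⟩

theorem kMinimal.exists_mem_invSet_of_add_le {k : ℕ} {α : Equiv.Perm (Fin n)}
    (hα : kMinimal k α) {a b : Fin n} (hab : (a, b) ∈ invSet α) (hk : (a : ℕ) + k ≤ b) :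
    ∃ c, (a, c) ∈ invSet α ∧ (c, b) ∈ invSet α := by
  obtain ⟨hab, hba⟩ := mem_invSet.1 hab
  obtain ⟨i, hpi, hiq, ⟨hi, hbi⟩, hi'⟩ :=
    Nat.exists_boundary_of_le (P := fun j => ∃ h : j < n, b ≤ α ⟨j, h⟩) hba.le
      ⟨(α.symm b).isLt, by simp⟩ (by simp [not_le.2 hab])
  have hi1 : i + 1 < n := by have := (α.symm a).isLt; omega
  set c := α ⟨i + 1, hi1⟩
  have hcb : c < b := by simpa [hi1] using hi'
  have hac : a < c := by
    have := hα.lt_add i hi1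
    rw [Fin.le_def] at hbi
    rw [Fin.lt_def]
    omega
  have hc : α.symm c = ⟨i + 1, hi1⟩ := α.symm_apply_apply _
  refine ⟨c, ⟨hac, ?_⟩, ⟨hcb, ?_⟩⟩
  · rw [hc]
    refine lt_of_le_of_ne (Fin.le_def.2 hiq) fun h => hac.ne' ?_
    rw [show c = α (α.symm a) from congrArg α h, α.apply_symm_apply]
  · rw [hc, Fin.lt_def]
    exact Nat.lt_succ_of_le hpi

end

theorem filter_of_kMinimal_union_of_classes_general (k n : ℕ)
    (α : Equiv.Perm (Fin n)) (hα : kMinimal k α)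
    (x y : Equiv.Perm (Fin n)) (hx : invSet α ⊆ invSet x)
    (hyx : recoilEquiv k n y x) :
    invSet α ⊆ invSet y := by
  rintro ⟨a, b⟩ hab
  induction h : (b : ℕ) - a using Nat.strong_induction_on generalizing a b with
  | _ d ih =>
    by_cases hd : (b : ℕ) - a < k
    · exact (hyx.mem_invSet_iff hd).2 (hx hab)
    · have hab' : (a : ℕ) < b := (mem_invSet.1 hab).1
      obtain ⟨c, hac, hcb⟩ := hα.exists_mem_invSet_of_add_le hab (by omega)
      have hac' : (a : ℕ) < c := (mem_invSet.1 hac).1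
      have hcb' : (c : ℕ) < b := (mem_invSet.1 hcb).1
      exact invSet_trans (ih _ (by omega) a c hac rfl) (ih _ (by omega) c b hcb rfl)

/-- for a `k`-minimal `α`, the order filter
`{x : Inv(α) ⊆ Inv(x)}` of the right weak order is a union of `≡_k` classes. -/
theorem filter_of_kMinimal_union_of_classes (k n : ℕ) (hk : 2 ≤ k)
    (α : Equiv.Perm (Fin n)) (hα : kMinimal k α)
    (x y : Equiv.Perm (Fin n)) (hx : invSet α ⊆ invSet x)
    (hyx : recoilEquiv k n y x) :
    invSet α ⊆ invSet y :=
  filter_of_kMinimal_union_of_classes_general k n α hα x y hx hyx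
end
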